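/- arXiv:2002.02988 — 6 statements merged into one kernel-verified Lean document; each statement's English description precedes it below -/
import Mathlib

section
/- If A is an n×n symmetric real matrix all of whose k×k principal submatrices are positive semidefinite (2 ≤ k ≤ n), then A has at most n - k negative eigenvalues; equivalently, the k largest eigenvalues of A are nonnegative. -/
open Matrix BigOperators Finset

noncomputable def frob {n : ℕ} (A : Matrix (Fin n) (Fin n) ℝ) : ℝ :=
  Real.sqrt (∑ i, ∑ j, (A i j)^2)

noncomputable def distPSD {n : ℕ} (M : Matrix (Fin n) (Fin n) ℝ) : ℝ :=
  sInf {d : ℝ | ∃ N : Matrix (Fin n) (Fin n) ℝ, N.PosSemidef ∧ d = frob (M - N)}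

def kPSD {n : ℕ} (k : ℕ) (M : Matrix (Fin n) (Fin n) ℝ) : Prop :=
  ∀ J : Finset (Fin n), J.card = k →
    (M.submatrix (fun i : {i // i ∈ J} => (i : Fin n))
      (fun i : {i // i ∈ J} => (i : Fin n))).PosSemidef

def kSparse {n : ℕ} (k : ℕ) (x : Fin n → ℝ) : Prop :=
  (Finset.univ.filter (fun i => x i ≠ 0)).card ≤ k

theorem stmt2 (n k : ℕ) (hk : 2 ≤ k) (hkn : k ≤ n)
    (A : Matrix (Fin n) (Fin n) ℝ) (hA : A.IsHermitian) (h : kPSD k A) :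
    (Finset.univ.filter (fun i => hA.eigenvalues i < 0)).card ≤ n - k := by
  classical
  by_contra hc
  push_neg at hc
  set S := Finset.univ.filter (fun i => hA.eigenvalues i < 0) with hS
  obtain ⟨J, -, hJcard⟩ := Finset.exists_subset_card_eq (s := (Finset.univ : Finset (Fin n))) (n := k)
    (by simpa using hkn)
  set b := hA.eigenvectorBasis with hb
  have li : LinearIndependent ℝ (fun i : {i // i ∈ S} => b i) :=
    b.orthonormal.linearIndependent.comp _ Subtype.coe_injective
  set V : Submodule ℝ (EuclideanSpace ℝ (Fin n)) :=
    Submodule.span ℝ (Set.range fun i : {i // i ∈ S} => b i) with hVdef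
  have hV : Module.finrank ℝ V = S.card := by
    rw [hVdef, finrank_span_eq_card li, Fintype.card_coe]
  -- projection onto coordinates outside J
  set P : V →ₗ[ℝ] ({i // i ∈ Jᶜ} → ℝ) :=
    { toFun := fun x i => (x : EuclideanSpace ℝ (Fin n)) (i : Fin n)
      map_add' := fun x y => rfl
      map_smul' := fun r x => rfl } with hP
  have hcod : Module.finrank ℝ ({i // i ∈ Jᶜ} → ℝ) = n - k := by
    rw [Module.finrank_fintype_fun_eq_card, Fintype.card_coe, Finset.card_compl, hJcard,
      Fintype.card_fin]
  have hnotinj : ¬ Function.Injective P := by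
    intro hinj
    have := LinearMap.finrank_le_finrank_of_injective hinj
    rw [hV, hcod] at this
    omega
  rw [← LinearMap.ker_eq_bot, Submodule.eq_bot_iff] at hnotinj
  push_neg at hnotinj
  obtain ⟨x, hxker, hxne⟩ := hnotinj
  set v : EuclideanSpace ℝ (Fin n) := (x : EuclideanSpace ℝ (Fin n)) with hv
  have hvne : v ≠ 0 := fun hz => hxne (Subtype.ext hz)
  have hvJ : ∀ i : Fin n, i ∉ J → v i = 0 := by
    intro i hi
    have h0 : P x = 0 := hxker
    have := congrFun h0 ⟨i, by simpa using hi⟩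
    exact this
  obtain ⟨c, hcv⟩ := (Submodule.mem_span_range_iff_exists_fun ℝ).mp (show v ∈ V from x.2)
  -- quadratic form as sum of eigenvalues
  have hAv : A *ᵥ v = ∑ i : {i // i ∈ S}, (hA.eigenvalues i * c i) • (b i : Fin n → ℝ) := by
    have hv2 : v = ∑ i : {i // i ∈ S}, c i • (b i : Fin n → ℝ) := by
      rw [← hcv]; simp [WithLp.ofLp_sum]
    rw [show A *ᵥ v = A.mulVecLin v from rfl, hv2, map_sum]
    refine Finset.sum_congr rfl fun i _ => ?_
    rw [LinearMap.map_smul, mulVecLin_apply,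
      show A *ᵥ (b (i : Fin n) : Fin n → ℝ) = hA.eigenvalues i • (b (i : Fin n) : Fin n → ℝ)
        from hA.mulVec_eigenvectorBasis (i : Fin n),
      smul_smul, mul_comm]
  have hdp : ∀ u w : EuclideanSpace ℝ (Fin n),
      (u : Fin n → ℝ) ⬝ᵥ (w : Fin n → ℝ) = (inner ℝ u w : ℝ) := by
    intro u w
    simp [dotProduct, PiLp.inner_apply, RCLike.inner_apply, conj_trivial]
    exact Finset.sum_congr rfl fun _ _ => mul_comm _ _
  have dd : ∀ d e : {i // i ∈ S} → ℝ,
      (inner ℝ (∑ i : {i // i ∈ S}, d i • (b i : EuclideanSpace ℝ (Fin n)))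
        (∑ j : {j // j ∈ S}, e j • (b j : EuclideanSpace ℝ (Fin n))) : ℝ)
      = ∑ i : {i // i ∈ S}, d i * e i := by
    intro d e
    rw [sum_inner]
    simp only [inner_sum, inner_smul_left, inner_smul_right, conj_trivial,
      orthonormal_iff_ite.mp b.orthonormal, Subtype.coe_inj, mul_ite, mul_one, mul_zero]
    simp [mul_comm]
  have key : v ⬝ᵥ (A *ᵥ v) = ∑ i : {i // i ∈ S}, hA.eigenvalues i * (c i)^2 := by
    rw [hAv]
    nth_rewrite 1 [← hcv]
    rw [hdp]
    simp only [WithLp.toLp_sum, WithLp.toLp_smul, WithLp.toLp_ofLp]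
    rw [dd]
    refine Finset.sum_congr rfl fun i _ => ?_
    ring
  obtain ⟨i0, hi0⟩ : ∃ i0 : {i // i ∈ S}, c i0 ≠ 0 := by
    by_contra hz
    push_neg at hz
    apply hvne
    rw [← hcv]
    simp [hz]
  have hneg : v ⬝ᵥ (A *ᵥ v) < 0 := by
    rw [key]
    have hlt : ∀ i : {i // i ∈ S}, hA.eigenvalues (i : Fin n) < 0 := fun i =>
      (Finset.mem_filter.mp i.2).2
    have := Finset.sum_lt_sum (s := Finset.univ)
      (f := fun i : {i // i ∈ S} => hA.eigenvalues (i : Fin n) * (c i)^2)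
      (g := fun _ => (0:ℝ))
      (fun i _ => mul_nonpos_of_nonpos_of_nonneg (le_of_lt (hlt i)) (sq_nonneg _))
      ⟨i0, Finset.mem_univ _, mul_neg_of_neg_of_pos (hlt i0) (by positivity)⟩
    simpa using this
  have hpos : 0 ≤ v ⬝ᵥ (A *ᵥ v) := by
    have hpsd := (h J hJcard).dotProduct_mulVec_nonneg (fun i : {i // i ∈ J} => v (i : Fin n))
    have inner_eq : ∀ i : Fin n, (∑ j : {j // j ∈ J}, A i j * v j) = ∑ j, A i j * v j := by
      intro i
      rw [Finset.sum_coe_sort J (fun j => A i j * v j)]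
      exact Finset.sum_subset (Finset.subset_univ J)
        (fun j _ hj => by rw [hvJ j hj, mul_zero])
    have outer_eq : (∑ i : {i // i ∈ J}, v i * ∑ j : {j // j ∈ J}, A i j * v j)
        = v ⬝ᵥ (A *ᵥ v) := by
      simp only [inner_eq]
      rw [Finset.sum_coe_sort J (fun i => v i * ∑ j, A i j * v j)]
      rw [Finset.sum_subset (Finset.subset_univ J)
        (fun i _ hi => by rw [hvJ i hi, zero_mul])]
      simp [dotProduct, mulVec]
    rw [← outer_eq]
    simpa [dotProduct, Matrix.mulVec, Matrix.submatrix] using hpsd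
  linarith
end

section
/- Let M be an n×n symmetric matrix in the k-PSD closure whose smallest eigenvalue is -λ₁ < 0. Then dist_F(M, S⁺ₙ) ≤ sqrt(n - k) · λ₁. -/
open Matrix BigOperators Finset

/-!
The eigenvectors of `M` with negative eigenvalue span a subspace of dimension `#{i | λᵢ < 0}` on
which the quadratic form of `M` is negative definite; for any `k`-set `J` of coordinates the
vectors supported on `J` form a `k`-dimensional subspace on which it is nonnegative, because the
principal submatrix on `J` is PSD. The two subspaces meet only in `0` (Sylvester's law of inertia),
so `M` has at most `n - k` negative eigenvalues. Cutting the negative eigenvalues out of the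
spectral decomposition gives a PSD matrix at Frobenius distance `√(∑ min(λᵢ, 0)²)`, and each of the
at most `n - k` nonzero terms is at most `λ₁²`.
-/

namespace Matrix

section

variable {ι κ : Type*} [Fintype ι] [Fintype κ]

theorem dotProduct_mul_mul_transpose_mulVec (U : Matrix ι κ ℝ) (B : Matrix κ κ ℝ) (x : ι → ℝ) :
    x ⬝ᵥ (U * B * Uᵀ) *ᵥ x = (Uᵀ *ᵥ x) ⬝ᵥ B *ᵥ (Uᵀ *ᵥ x) := by
  rw [← mulVec_mulVec, ← mulVec_mulVec, dotProduct_mulVec, mulVec_transpose]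

theorem dotProduct_diagonal_mulVec [DecidableEq ι] (d x : ι → ℝ) :
    x ⬝ᵥ diagonal d *ᵥ x = ∑ i, d i * (x i * x i) := by
  simp only [dotProduct, mulVec_diagonal]
  exact Finset.sum_congr rfl fun i _ => by ring

theorem sum_sq_eq_trace_transpose_mul_self (B : Matrix ι κ ℝ) :
    ∑ i, ∑ j, B i j ^ 2 = trace (Bᵀ * B) := by
  simp only [trace, diag, mul_apply, transpose_apply, sq]
  exact Finset.sum_comm

theorem sum_sq_mul_diagonal_mul_transpose [DecidableEq κ] {U : Matrix ι κ ℝ} (hU : Uᵀ * U = 1)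
    (d : κ → ℝ) : ∑ i, ∑ j, (U * diagonal d * Uᵀ) i j ^ 2 = ∑ i, d i ^ 2 := by
  have hconj : (U * diagonal d * Uᵀ)ᵀ * (U * diagonal d * Uᵀ) =
      U * diagonal (fun i => d i ^ 2) * Uᵀ := by
    simp only [transpose_mul, diagonal_transpose, transpose_transpose, Matrix.mul_assoc]
    rw [← Matrix.mul_assoc Uᵀ U, hU, Matrix.one_mul, ← Matrix.mul_assoc (diagonal d),
      diagonal_mul_diagonal]
    simp only [sq]
  rw [sum_sq_eq_trace_transpose_mul_self, hconj, trace_mul_cycle, hU, Matrix.one_mul,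
    trace_diagonal]

theorem dotProduct_mulVec_nonneg_of_posSemidef_submatrix {A : Matrix ι ι ℝ} {J : Finset ι}
    (hJ : (A.submatrix ((↑) : J → ι) (↑)).PosSemidef) {x : ι → ℝ}
    (hx : x ∈ Pi.spanSubset ℝ (J : Set ι)) : 0 ≤ x ⬝ᵥ A *ᵥ x := by
  rw [Pi.mem_spanSubset_iff] at hx
  have sum_eq : ∀ f : ι → ℝ, (∀ i ∉ J, f i = 0) → ∑ i, f i = ∑ i : J, f i := fun f hf => by
    rw [Finset.sum_coe_sort, Finset.sum_subset (subset_univ J) fun i _ hi => hf i hi]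
  have := hJ.dotProduct_mulVec_nonneg (fun i : J => x i)
  simp only [dotProduct, mulVec, submatrix_apply, star_trivial] at this ⊢
  rw [sum_eq _ fun i hi => by simp [hx i hi]]
  refine this.trans_eq (Finset.sum_congr rfl fun i _ => ?_)
  rw [sum_eq _ fun j hj => by simp [hx j hj]]

end

namespace IsHermitian

variable {ι : Type*} [Fintype ι] [DecidableEq ι] {A : Matrix ι ι ℝ} (hA : A.IsHermitian)

theorem transpose_eigenvectorUnitary_mul_self :
    (hA.eigenvectorUnitary : Matrix ι ι ℝ)ᵀ * hA.eigenvectorUnitary = 1 :=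
  mem_unitaryGroup_iff'.mp hA.eigenvectorUnitary.2

theorem eigenvectorUnitary_mul_transpose_self :
    (hA.eigenvectorUnitary : Matrix ι ι ℝ) * (hA.eigenvectorUnitary : Matrix ι ι ℝ)ᵀ = 1 :=
  mem_unitaryGroup_iff.mp hA.eigenvectorUnitary.2

theorem eq_eigenvectorUnitary_mul_diagonal_mul_transpose :
    A = hA.eigenvectorUnitary * diagonal hA.eigenvalues *
      (hA.eigenvectorUnitary : Matrix ι ι ℝ)ᵀ := by
  simpa [star_eq_conjTranspose, conjTranspose_eq_transpose_of_trivial] using hA.spectral_theorem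

theorem toQuadraticForm'_equivalent_weightedSumSquares :
    QuadraticMap.Equivalent A.toQuadraticForm'
      (QuadraticMap.weightedSumSquares ℝ hA.eigenvalues) := by
  let U : Matrix ι ι ℝ := hA.eigenvectorUnitary
  have hUinv : Invertible Uᵀ :=
    ⟨U, hA.eigenvectorUnitary_mul_transpose_self, hA.transpose_eigenvectorUnitary_mul_self⟩
  refine ⟨{ toLinearEquiv := toLinearEquiv' Uᵀ hUinv, map_app' := fun x => ?_ }⟩
  simp only [toLinearEquiv'_apply, AddHom.toFun_eq_coe, LinearMap.coe_toAddHom, toLin'_apply,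
    QuadraticMap.weightedSumSquares_apply, smul_eq_mul, toQuadraticForm',
    LinearMap.BilinMap.toQuadraticMap_apply, toLinearMap₂'_apply']
  conv_rhs => rw [hA.eq_eigenvectorUnitary_mul_diagonal_mul_transpose,
    dotProduct_mul_mul_transpose_mulVec, dotProduct_diagonal_mulVec]

theorem card_eigenvalues_neg_add_card_le {J : Finset ι}
    (hJ : (A.submatrix ((↑) : J → ι) (↑)).PosSemidef) :
    (univ.filter fun i => hA.eigenvalues i < 0).card + J.card ≤ Fintype.card ι := by
  have hsig := QuadraticForm.sigNeg_of_equiv_weightedSumSquares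
    hA.toQuadraticForm'_equivalent_weightedSumSquares
  have := QuadraticForm.sigPos_add_finrank_le_of_nonpos (Q := -A.toQuadraticForm')
    (V := Pi.spanSubset ℝ (J : Set ι)) fun x hx => by
      simpa [toQuadraticForm', toLinearMap₂'_apply'] using
        dotProduct_mulVec_nonneg_of_posSemidef_submatrix hJ hx
  rw [sigPos_neg, hsig, Pi.dim_spanSubset] at this
  simpa [Set.ncard_eq_toFinset_card'] using this

theorem sub_posPart_eq :
    A - hA.eigenvectorUnitary * diagonal (fun i => max (hA.eigenvalues i) 0) *
      (hA.eigenvectorUnitary : Matrix ι ι ℝ)ᵀ =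
    hA.eigenvectorUnitary * diagonal (fun i => min (hA.eigenvalues i) 0) *
      (hA.eigenvectorUnitary : Matrix ι ι ℝ)ᵀ := by
  nth_rewrite 1 [hA.eq_eigenvectorUnitary_mul_diagonal_mul_transpose]
  rw [← Matrix.sub_mul, ← Matrix.mul_sub, diagonal_sub]
  congr 3
  ext i
  linarith [max_add_min (hA.eigenvalues i) 0]

end IsHermitian

end Matrix

theorem distPSD_le_frob_sub {n : ℕ} (M : Matrix (Fin n) (Fin n) ℝ) {N : Matrix (Fin n) (Fin n) ℝ}
    (hN : N.PosSemidef) : distPSD M ≤ frob (M - N) :=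
  csInf_le ⟨0, by rintro _ ⟨N', -, rfl⟩; exact Real.sqrt_nonneg _⟩ ⟨N, hN, rfl⟩

theorem distPSD_le_sqrt_sum_sq_min_eigenvalues {n : ℕ} {M : Matrix (Fin n) (Fin n) ℝ}
    (hM : M.IsHermitian) : distPSD M ≤ √(∑ i, min (hM.eigenvalues i) 0 ^ 2) := by
  have hpos : (hM.eigenvectorUnitary * diagonal (fun i => max (hM.eigenvalues i) 0) *
      (hM.eigenvectorUnitary : Matrix (Fin n) (Fin n) ℝ)ᵀ).PosSemidef := by
    simpa [star_eq_conjTranspose, conjTranspose_eq_transpose_of_trivial] using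
      (PosSemidef.diagonal fun i => le_max_right _ _).mul_mul_conjTranspose_same
        (hM.eigenvectorUnitary : Matrix (Fin n) (Fin n) ℝ)
  refine (distPSD_le_frob_sub M hpos).trans_eq ?_
  rw [frob, hM.sub_posPart_eq,
    sum_sq_mul_diagonal_mul_transpose hM.transpose_eigenvectorUnitary_mul_self]

theorem sum_sq_min_zero_le {ι : Type*} [Fintype ι] {f : ι → ℝ} {c : ℝ} (hf : ∀ i, -c ≤ f i) :
    ∑ i, min (f i) 0 ^ 2 ≤ (univ.filter fun i => f i < 0).card * c ^ 2 := by
  rw [← Finset.sum_filter_of_ne (p := fun i => f i < 0) fun i _ hi => ?_]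
  · refine (Finset.sum_le_card_nsmul _ _ _ fun i hi => ?_).trans_eq (nsmul_eq_mul _ _)
    have hneg := (mem_filter.mp hi).2
    rw [min_eq_left hneg.le]
    nlinarith [hf i]
  · by_contra hnn
    exact hi (by simp [min_eq_right (not_lt.mp hnn)])

theorem stmt3_general (n k : ℕ) (hkn : k ≤ n)
    (M : Matrix (Fin n) (Fin n) ℝ) (hM : M.IsHermitian) (h : kPSD k M)
    (lam : ℝ) (hlam : 0 < lam)
    (hmin : ∀ i, -lam ≤ hM.eigenvalues i) :
    distPSD M ≤ Real.sqrt ((n : ℝ) - k) * lam := by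
  obtain ⟨J, -, hJ⟩ := exists_subset_card_eq (s := (univ : Finset (Fin n))) (by simpa using hkn)
  have hcard := hM.card_eigenvalues_neg_add_card_le (h J hJ)
  rw [hJ, Fintype.card_fin] at hcard
  have hcard' : ((univ.filter fun i => hM.eigenvalues i < 0).card : ℝ) ≤ n - k := by
    rw [le_sub_iff_add_le]
    exact_mod_cast hcard
  calc distPSD M ≤ √(∑ i, min (hM.eigenvalues i) 0 ^ 2) :=
        distPSD_le_sqrt_sum_sq_min_eigenvalues hM
    _ ≤ √((n - k) * lam ^ 2) := Real.sqrt_le_sqrt <|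
        (sum_sq_min_zero_le hmin).trans (mul_le_mul_of_nonneg_right hcard' (sq_nonneg lam))
    _ = √(n - k) * lam := by rw [Real.sqrt_mul' _ (sq_nonneg lam), Real.sqrt_sq hlam.le]

theorem stmt3 (n k : ℕ) (hk : 2 ≤ k) (hkn : k ≤ n)
    (M : Matrix (Fin n) (Fin n) ℝ) (hM : M.IsHermitian) (h : kPSD k M)
    (lam : ℝ) (hlam : 0 < lam)
    (hmin : ∀ i, -lam ≤ hM.eigenvalues i) (hex : ∃ i, hM.eigenvalues i = -lam) :
    distPSD M ≤ Real.sqrt ((n : ℝ) - k) * lam :=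
  stmt3_general n k hkn M hM h lam hlam hmin
end

section
/- For a, b ≥ 0, the Frobenius distance from G(a,b,n) to the PSD cone equals max{(n-1)a - b, 0}. -/
open Matrix BigOperators Finset

def G (a b : ℝ) (n : ℕ) : Matrix (Fin n) (Fin n) ℝ :=
  fun i j => if i = j then b else -a

lemma aux_quad (n : ℕ) (d e : ℝ) (x : Fin n → ℝ) :
    x ⬝ᵥ (Matrix.mulVec (fun i j => if i = j then d else e) x)
      = e * (∑ i, x i)^2 + (d - e) * ∑ i, (x i)^2 := by
  simp only [Matrix.mulVec, dotProduct]
  have h : ∀ i : Fin n, (∑ j, (if i = j then d else e) * x j)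
      = e * ∑ j, x j + (d - e) * x i := by
    intro i
    have h2 : ∀ j, (if i = j then d else e) * x j
        = e * x j + (if j = i then (d-e) * x j else 0) := by
      intro j; rcases eq_or_ne i j with h|h
      · subst h; simp; ring
      · simp [h, Ne.symm h]
    rw [Finset.sum_congr rfl (fun j _ => h2 j), Finset.sum_add_distrib,
      Finset.sum_ite_eq' _ i, ← Finset.mul_sum]
    simp
  rw [Finset.sum_congr rfl (fun i _ => by rw [h i])]
  simp only [mul_add, Finset.sum_add_distrib]
  rw [← Finset.sum_mul]
  have : ∀ i, x i * ((d - e) * x i) = (d-e) * (x i)^2 := fun i => by ring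
  rw [Finset.sum_congr rfl (fun i _ => this i), ← Finset.mul_sum]
  ring

lemma aux_cs (n : ℕ) (x : Fin n → ℝ) :
    (∑ i, x i)^2 ≤ (n : ℝ) * ∑ i, (x i)^2 := by
  have := sq_sum_le_card_mul_sum_sq (s := (Finset.univ : Finset (Fin n))) (f := x)
  simpa using this

lemma aux_herm (n : ℕ) (d e : ℝ) :
    Matrix.IsHermitian (fun i j => if i = j then d else e : Matrix (Fin n) (Fin n) ℝ) := by
  refine Matrix.IsHermitian.ext fun i j => ?_
  simp only [star_trivial]
  by_cases h : i = j <;> simp [h, eq_comm]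

lemma aux_psd (n : ℕ) (d e : ℝ) (he : e ≤ 0) (hde : 0 ≤ (n : ℝ) * e + (d - e)) :
    Matrix.PosSemidef (fun i j => if i = j then d else e : Matrix (Fin n) (Fin n) ℝ) := by
  refine Matrix.PosSemidef.of_dotProduct_mulVec_nonneg (aux_herm n d e) fun x => ?_
  simp only [star_trivial, RCLike.re_to_real]
  rw [aux_quad]
  have hcs := aux_cs n x
  have hq : 0 ≤ ∑ i, (x i)^2 := Finset.sum_nonneg fun i _ => sq_nonneg _
  nlinarith [mul_nonneg (neg_nonneg.2 he) (sub_nonneg.2 hcs)]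

lemma aux_sum (n : ℕ) (A : Matrix (Fin n) (Fin n) ℝ) :
    (fun _ => (1:ℝ)) ⬝ᵥ A.mulVec (fun _ => 1) = ∑ i, ∑ j, A i j := by
  simp [dotProduct, Matrix.mulVec]

theorem stmt9 (n : ℕ) (a b : ℝ) (ha : 0 ≤ a) (hb : 0 ≤ b) :
    distPSD (G a b n) = max (((n : ℝ) - 1) * a - b) 0 := by
  set c : ℝ := ((n : ℝ) - 1) * a - b with hc
  set S : Set ℝ := {d : ℝ | ∃ N : Matrix (Fin n) (Fin n) ℝ, N.PosSemidef ∧ d = frob (G a b n - N)}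
    with hS
  -- lower bound
  have hlb : ∀ d ∈ S, max c 0 ≤ d := by
    rintro d ⟨N, hN, rfl⟩
    rw [max_le_iff]
    refine ⟨?_, Real.sqrt_nonneg _⟩
    rcases le_or_gt c 0 with h | h
    · exact h.trans (Real.sqrt_nonneg _)
    · have hn : 0 < n := by
        rcases Nat.eq_zero_or_pos n with h0 | h0
        · exfalso
          have hcle : c ≤ 0 := by simp only [hc, h0]; push_cast; nlinarith
          linarith
        · exact h0
      have hnR : (0:ℝ) < n := Nat.cast_pos.2 hn
      set M := G a b n - N with hM
      -- sum of entries of G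
      have hsG : ∑ i, ∑ j, G a b n i j = -a * (n:ℝ)^2 + (b + a) * n := by
        rw [← aux_sum n (G a b n)]
        have : G a b n = (fun i j => if i = j then b else -a) := rfl
        rw [this, aux_quad]
        simp only [one_pow, Finset.sum_const, Finset.card_univ, Fintype.card_fin,
          nsmul_eq_mul, mul_one]
        ring
      have hsN : 0 ≤ ∑ i, ∑ j, N i j := by
        have := hN.dotProduct_mulVec_nonneg (fun _ => 1)
        rwa [star_trivial, aux_sum n N] at this
      have hT : ∑ i, ∑ j, M i j ≤ -((n:ℝ) * c) := by
        have : ∑ i, ∑ j, M i j = (∑ i, ∑ j, G a b n i j) - ∑ i, ∑ j, N i j := by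
          simp [hM, Matrix.sub_apply, Finset.sum_sub_distrib]
        rw [this, hsG]
        have : -a * (n:ℝ)^2 + (b + a) * n = -((n:ℝ) * c) := by rw [hc]; ring
        linarith
      have hTsq : ((n:ℝ) * c)^2 ≤ (∑ i, ∑ j, M i j)^2 := by
        have h1 : (n:ℝ) * c ≤ -(∑ i, ∑ j, M i j) := by linarith
        have h2 : (0:ℝ) ≤ (n:ℝ) * c := by positivity
        nlinarith
      have hcs : (∑ i, ∑ j, M i j)^2 ≤ ((n:ℝ) * n) * ∑ i, ∑ j, (M i j)^2 := by
        have h1 : ∑ i, ∑ j, M i j = ∑ p : Fin n × Fin n, M p.1 p.2 := by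
          rw [Fintype.sum_prod_type]
        have h2 : ∑ i, ∑ j, (M i j)^2 = ∑ p : Fin n × Fin n, (M p.1 p.2)^2 := by
          rw [Fintype.sum_prod_type]
        rw [h1, h2]
        have := aux_cs (n * n) (fun k => M ((finProdFinEquiv.symm k).1) ((finProdFinEquiv.symm k).2))
        rw [← Equiv.sum_comp finProdFinEquiv.symm (fun p : Fin n × Fin n => M p.1 p.2),
            ← Equiv.sum_comp finProdFinEquiv.symm (fun p : Fin n × Fin n => (M p.1 p.2)^2)]
        simpa [Nat.cast_mul] using this
      have hfin : c^2 ≤ ∑ i, ∑ j, (M i j)^2 := by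
        have hnn : (0:ℝ) < (n:ℝ) * n := by positivity
        nlinarith
      calc c = Real.sqrt (c^2) := (Real.sqrt_sq h.le).symm
        _ ≤ Real.sqrt (∑ i, ∑ j, (M i j)^2) := Real.sqrt_le_sqrt hfin
        _ = frob M := rfl
  -- membership
  have hmem : max c 0 ∈ S := by
    rcases le_or_gt c 0 with h | h
    · rw [max_eq_right h]
      refine ⟨G a b n, ?_, ?_⟩
      · have : G a b n = (fun i j => if i = j then b else -a) := rfl
        rw [this]
        apply aux_psd n b (-a) (by linarith)
        have : (n:ℝ) * -a + (b - -a) = -c := by rw [hc]; ring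
        rw [this]; linarith
      · simp [frob, Matrix.sub_apply]
    · have hn : 0 < n := by
        rcases Nat.eq_zero_or_pos n with h0 | h0
        · exfalso
          have hcle : c ≤ 0 := by simp only [hc, h0]; push_cast; nlinarith
          linarith
        · exact h0
      have hnR : (0:ℝ) < n := Nat.cast_pos.2 hn
      rw [max_eq_left h.le]
      set N2 : Matrix (Fin n) (Fin n) ℝ := fun i j => if i = j then b + c / n else -a + c / n
        with hN2
      refine ⟨N2, ?_, ?_⟩
      · rw [hN2]
        apply aux_psd
        · have : c / n ≤ a := by
            rw [div_le_iff₀ hnR, hc]; nlinarith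
          linarith
        · have : (n:ℝ) * (-a + c / n) + (b + c / n - (-a + c / n)) = 0 := by
            field_simp; rw [hc]; ring
          rw [this]
      · have hentry : ∀ i j : Fin n, (G a b n - N2) i j = -(c / n) := by
          intro i j
          rw [Matrix.sub_apply]
          simp only [Matrix.sub_apply, G, hN2]
          by_cases hij : i = j <;> simp [hij] <;> ring
        rw [frob]
        have hsum : ∑ i, ∑ j, ((G a b n - N2) i j)^2 = c^2 := by
          rw [Finset.sum_congr rfl (fun i _ => Finset.sum_congr rfl (fun j _ => by
            rw [hentry i j]))]
          simp [Finset.sum_const]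
          field_simp
        rw [hsum, Real.sqrt_sq h.le]
  -- conclude
  have hbdd : BddBelow S := ⟨max c 0, fun d hd => hlb d hd⟩
  exact le_antisymm (csInf_le hbdd hmem) (le_csInf ⟨_, hmem⟩ hlb)
end

section
/- For all 2 ≤ k < n, there exists an n×n symmetric matrix M with Frobenius norm 1 whose k×k principal submatrices are all PSD and such that dist_F(M, S⁺ₙ) ≥ (n - k)/sqrt((k-1)²·n + n(n-1)). -/
open Matrix BigOperators Finset

/-!
With `J` the all-ones matrix, `M = ā (k I - J)`. Each `k × k` principal submatrix is
`ā (k I - J)` again, which is PSD by Cauchy–Schwarz, `(∑ xᵢ)² ≤ k ∑ xᵢ²`. For the distance, test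
against the all-ones vector `𝟙`: `𝟙ᵀ N 𝟙 ≥ 0` for every PSD `N`, `𝟙ᵀ M 𝟙 = -ā n (n - k)`, and
`|𝟙ᵀ A 𝟙| ≤ n ‖A‖_F`; hence `‖M - N‖_F ≥ ā (n - k)`.
-/

section DiagOffDiag

variable {ι : Type*} [DecidableEq ι]

/-- The matrix `G(a, b, n)` of the paper, with `n = card ι`. -/
def diagOffDiag (a b : ℝ) : Matrix ι ι ℝ :=
  Matrix.of fun i j => if i = j then b else -a

lemma diagOffDiag_apply (a b : ℝ) (i j : ι) :
    diagOffDiag a b i j = if i = j then b else -a :=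
  rfl

lemma diagOffDiag_isSymm (a b : ℝ) : (diagOffDiag a b : Matrix ι ι ℝ).IsSymm := by
  ext i j
  simp only [transpose_apply, diagOffDiag_apply, eq_comm]

lemma diagOffDiag_submatrix {κ : Type*} [DecidableEq κ] {f : κ → ι}
    (hf : Function.Injective f) (a b : ℝ) :
    (diagOffDiag a b : Matrix ι ι ℝ).submatrix f f = diagOffDiag a b := by
  ext i j
  simp only [submatrix_apply, diagOffDiag_apply, hf.eq_iff]

variable [Fintype ι]

lemma sum_ite_eq_add_card_sub_one_mul (i : ι) (x y : ℝ) :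
    ∑ j, (if i = j then x else y) = x + ((Fintype.card ι : ℝ) - 1) * y := by
  rw [← Finset.add_sum_erase _ _ (mem_univ i), if_pos rfl,
    sum_congr rfl fun j hj => if_neg (ne_of_mem_erase hj).symm, sum_const,
    card_erase_of_mem (mem_univ i), card_univ, nsmul_eq_mul,
    Nat.cast_pred (Fintype.card_pos_iff.2 ⟨i⟩)]

lemma sum_diagOffDiag (a b : ℝ) :
    ∑ i, ∑ j, (diagOffDiag a b : Matrix ι ι ℝ) i j
      = Fintype.card ι * (b - ((Fintype.card ι : ℝ) - 1) * a) := by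
  simp only [diagOffDiag_apply, sum_ite_eq_add_card_sub_one_mul, sum_const, card_univ,
    nsmul_eq_mul]
  ring

lemma sum_sq_diagOffDiag (a b : ℝ) :
    ∑ i, ∑ j, ((diagOffDiag a b : Matrix ι ι ℝ) i j) ^ 2
      = Fintype.card ι * (b ^ 2 + ((Fintype.card ι : ℝ) - 1) * a ^ 2) := by
  simp only [diagOffDiag_apply, apply_ite (· ^ 2), neg_sq, sum_ite_eq_add_card_sub_one_mul,
    sum_const, card_univ, nsmul_eq_mul]

lemma dotProduct_diagOffDiag_mulVec (a b : ℝ) (x : ι → ℝ) :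
    x ⬝ᵥ diagOffDiag a b *ᵥ x = (a + b) * ∑ i, x i ^ 2 - a * (∑ i, x i) ^ 2 := by
  have hrow : ∀ i, (diagOffDiag a b *ᵥ x) i = (a + b) * x i - a * ∑ j, x j := by
    intro i
    have hentry : ∀ j,
        diagOffDiag a b i j * x j = (if i = j then (a + b) * x j else 0) - a * x j := by
      intro j
      rw [diagOffDiag_apply]
      split_ifs <;> ring
    simp only [mulVec, dotProduct, hentry, sum_sub_distrib, sum_ite_eq, mem_univ, if_true, mul_sum]
  simp only [dotProduct, hrow, mul_sub, sum_sub_distrib, sq, mul_sum, sum_mul]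
  congr 1 <;> refine sum_congr rfl fun i _ => ?_
  · ring
  · exact sum_congr rfl fun j _ => by ring

lemma diagOffDiag_posSemidef {a b : ℝ} (ha : 0 ≤ a)
    (hab : ((Fintype.card ι : ℝ) - 1) * a ≤ b) :
    (diagOffDiag a b : Matrix ι ι ℝ).PosSemidef := by
  refine .of_dotProduct_mulVec_nonneg (diagOffDiag_isSymm a b) fun x => ?_
  rw [star_trivial, dotProduct_diagOffDiag_mulVec]
  have hCS : (∑ i, x i) ^ 2 ≤ Fintype.card ι * ∑ i, x i ^ 2 := sq_sum_le_card_mul_sum_sq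
  have hsq : 0 ≤ ∑ i, x i ^ 2 := by positivity
  nlinarith [mul_le_mul_of_nonneg_left hCS ha]

end DiagOffDiag

lemma sum_entries_nonneg_of_posSemidef {n : ℕ} {N : Matrix (Fin n) (Fin n) ℝ}
    (hN : N.PosSemidef) : 0 ≤ ∑ i, ∑ j, N i j := by
  simpa [dotProduct, mulVec, mul_sum] using hN.dotProduct_mulVec_nonneg fun _ => 1

lemma abs_sum_entries_le_mul_frob {n : ℕ} (A : Matrix (Fin n) (Fin n) ℝ) :
    |∑ i, ∑ j, A i j| ≤ n * frob A := by
  have hCS : (∑ p : Fin n × Fin n, A p.1 p.2) ^ 2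
      ≤ n ^ 2 * ∑ p : Fin n × Fin n, A p.1 p.2 ^ 2 := by
    simpa [sq] using
      sq_sum_le_card_mul_sum_sq (s := univ) (f := fun p : Fin n × Fin n => A p.1 p.2)
  rw [Fintype.sum_prod_type, Fintype.sum_prod_type] at hCS
  rw [frob, ← Real.sqrt_sq_eq_abs, ← Real.sqrt_sq n.cast_nonneg, ← Real.sqrt_mul (by positivity)]
  exact Real.sqrt_le_sqrt hCS

lemma neg_sum_entries_div_le_distPSD {n : ℕ} (M : Matrix (Fin n) (Fin n) ℝ) :
    -(∑ i, ∑ j, M i j) / n ≤ distPSD M := by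
  refine le_csInf ⟨_, 0, .zero, rfl⟩ ?_
  rintro _ ⟨N, hN, rfl⟩
  have hsum : ∑ i, ∑ j, (M - N) i j = ∑ i, ∑ j, M i j - ∑ i, ∑ j, N i j := by
    simp only [Matrix.sub_apply, sum_sub_distrib]
  refine div_le_of_le_mul₀ n.cast_nonneg (Real.sqrt_nonneg _) ?_
  calc -(∑ i, ∑ j, M i j) ≤ -(∑ i, ∑ j, (M - N) i j) := by
        linarith [sum_entries_nonneg_of_posSemidef hN]
    _ ≤ |∑ i, ∑ j, (M - N) i j| := neg_le_abs _
    _ ≤ frob (M - N) * n := by rw [mul_comm]; exact abs_sum_entries_le_mul_frob _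

theorem stmt10 (n k : ℕ) (hk : 2 ≤ k) (hkn : k < n) :
    ∃ M : Matrix (Fin n) (Fin n) ℝ, M.IsSymm ∧ frob M = 1 ∧ kPSD k M ∧
      ((n : ℝ) - k) / Real.sqrt (((k : ℝ) - 1)^2 * n + n * ((n : ℝ) - 1))
        ≤ distPSD M := by
  have hn1 : (1 : ℝ) < n := by exact_mod_cast (by omega : 1 < n)
  set D : ℝ := ((k : ℝ) - 1)^2 * n + n * ((n : ℝ) - 1)
  have hD : 0 < D := by positivity
  have ha : 0 ≤ (√D)⁻¹ := by positivity
  have haD : ((√D)⁻¹) ^ 2 * D = 1 := by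
    rw [inv_pow, Real.sq_sqrt hD.le, inv_mul_cancel₀ hD.ne']
  refine ⟨diagOffDiag (√D)⁻¹ ((k - 1) * (√D)⁻¹), diagOffDiag_isSymm _ _, ?_, ?_, ?_⟩
  · rw [frob, sum_sq_diagOffDiag, Fintype.card_fin, Real.sqrt_eq_one]
    linear_combination haD
  · intro J hJ
    rw [diagOffDiag_submatrix Subtype.val_injective]
    exact diagOffDiag_posSemidef ha (by rw [Fintype.card_coe, hJ])
  · refine le_trans (le_of_eq ?_) (neg_sum_entries_div_le_distPSD _)
    rw [sum_diagOffDiag, Fintype.card_fin]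
    field_simp
    ring
end

section
/- Let D = diag(-λ₁,...,-λ_ℓ, μ₁,...,μ_{n-ℓ}) with λᵢ > 0 and μⱼ ≥ 0, and let D⁺ = diag(0,...,0, μ₁,...,μ_{n-ℓ}). Then for every PSD matrix N, ‖D - N‖_F ≥ ‖D - D⁺‖_F = sqrt(∑ᵢ λᵢ²); i.e., D⁺ is a nearest PSD matrix to D in Frobenius norm. -/
open Matrix BigOperators Finset

/-! The Frobenius norm of `D - N` is at least that of its diagonal, and since `N i i ≥ 0`,
each diagonal entry satisfies `(d i - N i i)² ≥ (min (d i) 0)²`, which is exactly the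
contribution of entry `i` to `D - D⁺`. -/

lemma sub_max_zero_eq_min {α : Type*} [AddCommGroup α] [LinearOrder α] [IsOrderedAddMonoid α]
    (a : α) : a - max a 0 = min a 0 := by
  rcases le_total a 0 with h | h <;> simp [h]

lemma min_zero_sq_le_sub_sq {α : Type*} [CommRing α] [LinearOrder α] [IsStrictOrderedRing α]
    (a : α) {c : α} (hc : 0 ≤ c) : min a 0 ^ 2 ≤ (a - c) ^ 2 := by
  rcases le_total a 0 with h | h
  · rw [min_eq_left h, sq_le_sq, abs_of_nonpos h, abs_of_nonpos (by linarith)]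
    linarith
  · rw [min_eq_right h, sq, zero_mul]
    exact sq_nonneg _

lemma frob_diagonal {n : ℕ} (v : Fin n → ℝ) : frob (diagonal v) = √(∑ i, v i ^ 2) := by
  unfold frob
  congr 1
  refine sum_congr rfl fun i _ => ?_
  rw [sum_eq_single i (fun j _ hj => by simp [diagonal_apply_ne _ hj.symm]) (by simp)]
  simp

lemma sqrt_sum_diag_sq_le_frob {n : ℕ} (A : Matrix (Fin n) (Fin n) ℝ) :
    √(∑ i, A i i ^ 2) ≤ frob A :=
  Real.sqrt_le_sqrt <| sum_le_sum fun i _ =>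
    single_le_sum (f := fun j => A i j ^ 2) (fun _ _ => sq_nonneg _) (mem_univ i)

theorem stmt11 (n : ℕ) (d : Fin n → ℝ)
    (N : Matrix (Fin n) (Fin n) ℝ) (hN : N.PosSemidef) :
    frob (Matrix.diagonal d - Matrix.diagonal (fun i => max (d i) 0))
      ≤ frob (Matrix.diagonal d - N) ∧
    frob (Matrix.diagonal d - Matrix.diagonal (fun i => max (d i) 0))
      = Real.sqrt (∑ i, (min (d i) 0)^2) := by
  have hD : frob (diagonal d - diagonal fun i => max (d i) 0) = √(∑ i, min (d i) 0 ^ 2) := by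
    simp only [diagonal_sub, frob_diagonal, sub_max_zero_eq_min]
  refine ⟨?_, hD⟩
  calc frob (diagonal d - diagonal fun i => max (d i) 0)
      = √(∑ i, min (d i) 0 ^ 2) := hD
    _ ≤ √(∑ i, (diagonal d - N) i i ^ 2) := Real.sqrt_le_sqrt <| sum_le_sum fun i _ => by
        simpa using min_zero_sq_le_sub_sq (d i) hN.diag_nonneg
    _ ≤ frob (diagonal d - N) := sqrt_sum_diag_sq_le_frob _
end

section
/- Let W be an m×n real matrix with m < n and 0 < δ < 1, and define M = -(1-δ)·Iₙ + WᵀW. Then the Frobenius distance from M to the PSD cone is at least sqrt(n - m)·(1-δ). -/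
/-!
On the kernel `K` of `W`, of dimension at least `n - m`, the quadratic form of `M` is
`-(1 - δ) ‖x‖²`. So for every PSD `N` and every orthonormal basis `(vⱼ)` of `K` we get
`vⱼᵀ (M - N) vⱼ ≤ -(1 - δ)`, hence `‖(M - N) vⱼ‖ ≥ 1 - δ` by Cauchy–Schwarz. Bessel's inequality
for the rows of `M - N` gives `∑ⱼ ‖(M - N) vⱼ‖² ≤ ‖M - N‖_F²`, so `‖M - N‖_F² ≥ dim K · (1 - δ)²`.
-/

open Matrix BigOperators Finset

open RealInnerProductSpace Module

section

variable {l n ι : Type*} [Fintype l] [Fintype n] [Fintype ι]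

lemma sum_sum_sq_mulVec_le_of_orthonormal (A : Matrix l n ℝ) {v : ι → EuclideanSpace ℝ n}
    (hv : Orthonormal ℝ v) :
    ∑ j, ∑ i, (A *ᵥ (v j).ofLp) i ^ 2 ≤ ∑ i, ∑ k, A i k ^ 2 := by
  rw [Finset.sum_comm]
  gcongr with i
  have hrow : ∀ j, (A *ᵥ (v j).ofLp) i = ⟪v j, WithLp.toLp 2 (A i)⟫ := by
    intro j
    simp [PiLp.inner_apply, mulVec, dotProduct]
  calc ∑ j, (A *ᵥ (v j).ofLp) i ^ 2 = ∑ j, ‖⟪v j, WithLp.toLp 2 (A i)⟫‖ ^ 2 := by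
        simp [hrow]
    _ ≤ ‖WithLp.toLp 2 (A i)‖ ^ 2 := hv.sum_inner_products_le _
    _ = ∑ k, A i k ^ 2 := EuclideanSpace.real_norm_sq_eq _

lemma sq_dotProduct_le_of_norm_eq_one {x : EuclideanSpace ℝ n} (hx : ‖x‖ = 1) (y : n → ℝ) :
    (x.ofLp ⬝ᵥ y) ^ 2 ≤ ∑ i, y i ^ 2 :=
  calc (x.ofLp ⬝ᵥ y) ^ 2 ≤ (∑ i, x i ^ 2) * ∑ i, y i ^ 2 := Finset.sum_mul_sq_le_sq_mul_sq _ _ _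
    _ = ∑ i, y i ^ 2 := by rw [← EuclideanSpace.real_norm_sq_eq, hx, one_pow, one_mul]

lemma dotProduct_mulVec_le_neg_of_mulVec_eq_zero [DecidableEq n] (W : Matrix l n ℝ)
    {N : Matrix n n ℝ} (hN : N.PosSemidef) (c : ℝ) {x : EuclideanSpace ℝ n} (hx : ‖x‖ = 1)
    (hWx : W *ᵥ x.ofLp = 0) :
    x.ofLp ⬝ᵥ (-(c • 1) + Wᵀ * W - N) *ᵥ x.ofLp ≤ -c := by
  have hxx : x.ofLp ⬝ᵥ x.ofLp = 1 := by
    simpa [dotProduct, sq, hx] using (EuclideanSpace.real_norm_sq_eq x).symm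
  have hNx : 0 ≤ x.ofLp ⬝ᵥ N *ᵥ x.ofLp := by simpa using hN.dotProduct_mulVec_nonneg x.ofLp
  rw [sub_mulVec, add_mulVec, neg_mulVec, smul_mulVec, one_mulVec, ← mulVec_mulVec, hWx,
    mulVec_zero, add_zero, dotProduct_sub, dotProduct_neg, dotProduct_smul, hxx, smul_eq_mul,
    mul_one]
  linarith

lemma card_le_card_add_finrank_ker_toEuclideanLin [DecidableEq n] (W : Matrix l n ℝ) :
    Fintype.card n ≤ Fintype.card l + finrank ℝ (LinearMap.ker W.toEuclideanLin) := by
  have hrange : finrank ℝ (LinearMap.range W.toEuclideanLin) ≤ Fintype.card l :=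
    (Submodule.finrank_le _).trans (finrank_euclideanSpace).le
  have := LinearMap.finrank_range_add_finrank_ker W.toEuclideanLin
  rw [finrank_euclideanSpace] at this
  omega

end

lemma sqrt_card_mul_le_frob {ι : Type*} [Fintype ι] {n : ℕ} {A : Matrix (Fin n) (Fin n) ℝ}
    {v : ι → EuclideanSpace ℝ (Fin n)} (hv : Orthonormal ℝ v) {c : ℝ} (hc : 0 ≤ c)
    (hA : ∀ j, (v j).ofLp ⬝ᵥ A *ᵥ (v j).ofLp ≤ -c) :
    √(Fintype.card ι) * c ≤ frob A := by
  have hsum : Fintype.card ι * c ^ 2 ≤ ∑ i, ∑ k, A i k ^ 2 :=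
    calc Fintype.card ι * c ^ 2 = ∑ _j : ι, c ^ 2 := by simp
      _ ≤ ∑ j, ((v j).ofLp ⬝ᵥ A *ᵥ (v j).ofLp) ^ 2 :=
        Finset.sum_le_sum fun j _ => by nlinarith [hA j]
      _ ≤ ∑ j, ∑ i, (A *ᵥ (v j).ofLp) i ^ 2 := by
        gcongr with j; exact sq_dotProduct_le_of_norm_eq_one (hv.1 j) _
      _ ≤ ∑ i, ∑ k, A i k ^ 2 := sum_sum_sq_mulVec_le_of_orthonormal A hv
  calc √(Fintype.card ι) * c = √(Fintype.card ι * c ^ 2) := by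
        rw [Real.sqrt_mul (by positivity), Real.sqrt_sq hc]
    _ ≤ frob A := Real.sqrt_le_sqrt hsum

lemma le_distPSD {n : ℕ} {M : Matrix (Fin n) (Fin n) ℝ} {d : ℝ}
    (h : ∀ N : Matrix (Fin n) (Fin n) ℝ, N.PosSemidef → d ≤ frob (M - N)) : d ≤ distPSD M :=
  le_csInf ⟨_, 0, .zero, rfl⟩ (by rintro _ ⟨N, hN, rfl⟩; exact h N hN)

theorem stmt14_general (m n : ℕ) (δ : ℝ) (hδ1 : δ < 1)
    (W : Matrix (Fin m) (Fin n) ℝ) :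
    Real.sqrt ((n : ℝ) - m) * (1 - δ)
      ≤ distPSD (-((1 - δ) • (1 : Matrix (Fin n) (Fin n) ℝ)) + Wᵀ * W) := by
  set K := LinearMap.ker W.toEuclideanLin
  let b := stdOrthonormalBasis ℝ K
  have hb : Orthonormal ℝ fun j => (b j : EuclideanSpace ℝ (Fin n)) :=
    b.orthonormal.comp_linearIsometry K.subtypeₗᵢ
  have hdim : (n : ℝ) - m ≤ finrank ℝ K := by
    have := card_le_card_add_finrank_ker_toEuclideanLin W
    simp only [Fintype.card_fin] at this
    linarith [(by exact_mod_cast this : (n : ℝ) ≤ m + finrank ℝ K)]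
  refine le_distPSD fun N hN => ?_
  calc √((n : ℝ) - m) * (1 - δ) ≤ √(finrank ℝ K) * (1 - δ) := by gcongr
    _ ≤ _ := by
      simpa using sqrt_card_mul_le_frob hb (sub_nonneg.2 hδ1.le) fun j =>
        dotProduct_mulVec_le_neg_of_mulVec_eq_zero W hN (1 - δ) (hb.1 j)
          (congrArg WithLp.ofLp (LinearMap.mem_ker.1 (b j).2))

theorem stmt14 (m n : ℕ) (hmn : m < n) (δ : ℝ) (hδ0 : 0 < δ) (hδ1 : δ < 1)
    (W : Matrix (Fin m) (Fin n) ℝ) :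
    Real.sqrt ((n : ℝ) - m) * (1 - δ)
      ≤ distPSD (-((1 - δ) • (1 : Matrix (Fin n) (Fin n) ℝ)) + Wᵀ * W) :=
  stmt14_general m n δ hδ1 W
end
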